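/- arXiv:2505.02986 — 7 statements merged into one kernel-verified Lean document; each statement's English description precedes it below -/
import Mathlib

section
/- Let σ(x) = 1/(1+exp(−x)) be the logistic function and for real numbers a, b set p_a = σ(a), p_b = σ(b). Then D_KL(p_a‖p_b) + D_KL(p_b‖p_a) ≤ max(p_a, p_b) · (a − b)². -/
/-- The logistic (sigmoid) function `σ(x) = 1/(1+exp(−x))`. -/
noncomputable def logistic (x : ℝ) : ℝ := 1 / (1 + Real.exp (-x))

/-- Kullback–Leibler divergence between Bernoulli(p) and Bernoulli(q). -/
noncomputable def klBernoulli (p q : ℝ) : ℝ :=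
  p * Real.log (p / q) + (1 - p) * Real.log ((1 - p) / (1 - q))

/-!
The symmetrised divergence of two Bernoulli laws is `(p - q) (logit p - logit q)`, and the logit
inverts `σ`, so the left-hand side equals `(σ a - σ b) (a - b)`. Since `σ' = σ (1 - σ) ≤ σ` and `σ`
is increasing, the mean value inequality gives `σ a - σ b ≤ σ a (a - b)` for `b ≤ a`.
-/

open Real Set

theorem logistic_eq_sigmoid : logistic = sigmoid := funext fun _ ↦ one_div _

noncomputable def logit (p : ℝ) : ℝ := log (p / (1 - p))

theorem logit_sigmoid (x : ℝ) : logit (sigmoid x) = x := by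
  rw [logit, ← sigmoid_neg, ← sigmoid_mul_rexp_neg,
    div_mul_cancel_left₀ (sigmoid_pos x).ne', ← exp_neg, log_exp, neg_neg]

theorem klBernoulli_add_klBernoulli {p q : ℝ} (hp₀ : p ≠ 0) (hp₁ : p ≠ 1) (hq₀ : q ≠ 0)
    (hq₁ : q ≠ 1) : klBernoulli p q + klBernoulli q p = (p - q) * (logit p - logit q) := by
  have hp₁' : 1 - p ≠ 0 := sub_ne_zero.2 hp₁.symm
  have hq₁' : 1 - q ≠ 0 := sub_ne_zero.2 hq₁.symm
  simp only [klBernoulli, logit, log_div, hp₀, hq₀, hp₁', hq₁', ne_eq, not_false_eq_true]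
  ring

theorem sigmoid_sub_sigmoid_le {a b : ℝ} (hba : b ≤ a) :
    sigmoid a - sigmoid b ≤ sigmoid a * (a - b) := by
  refine (convex_Iic a).image_sub_le_mul_sub_of_deriv_le continuous_sigmoid.continuousOn
    differentiable_sigmoid.differentiableOn (fun x hx ↦ ?_) b hba a self_mem_Iic hba
  rw [interior_Iic] at hx
  rw [deriv_sigmoid]
  calc sigmoid x * (1 - sigmoid x) ≤ sigmoid x :=
        mul_le_of_le_one_right (sigmoid_nonneg x) (sub_le_self 1 (sigmoid_nonneg x))
    _ ≤ sigmoid a := sigmoid_le (le_of_lt hx)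

theorem sigmoid_sub_sigmoid_mul_sub_le (a b : ℝ) :
    (sigmoid a - sigmoid b) * (a - b) ≤ max (sigmoid a) (sigmoid b) * (a - b) ^ 2 := by
  wlog hba : b ≤ a generalizing a b
  · rw [max_comm]
    convert this b a (le_of_not_ge hba) using 1 <;> ring
  rw [max_eq_left (sigmoid_le hba), sq, ← mul_assoc]
  exact mul_le_mul_of_nonneg_right (sigmoid_sub_sigmoid_le hba) (sub_nonneg.2 hba)

/-- The symmetrized KL divergence between Bernoulli(σ(a)) and Bernoulli(σ(b))
is at most `max(σ(a), σ(b)) · (a − b)²`. -/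
theorem symm_kl_bernoulli_logistic_le (a b : ℝ) :
    klBernoulli (logistic a) (logistic b) + klBernoulli (logistic b) (logistic a)
      ≤ max (logistic a) (logistic b) * (a - b) ^ 2 := by
  rw [logistic_eq_sigmoid, klBernoulli_add_klBernoulli (sigmoid_pos a).ne'
    (sigmoid_lt_one a).ne (sigmoid_pos b).ne' (sigmoid_lt_one b).ne, logit_sigmoid, logit_sigmoid]
  exact sigmoid_sub_sigmoid_mul_sub_le a b
end

section
/- Let σ(x) = 1/(1+exp(−x)) be the logistic function. For all real numbers a, b ≤ 0, (√σ(a) − √σ(b))² ≥ (1/32) · exp(min(a,b)) · (a − b)². -/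
lemma sqrt_logistic_eq (x : ℝ) :
    Real.sqrt (logistic x) = Real.exp (x/2) / Real.sqrt (1 + Real.exp (x/2) ^ 2) := by
  have h1 : Real.exp (x/2) ^ 2 = Real.exp x := by
    rw [sq, ← Real.exp_add]; ring_nf
  have h2 : logistic x = Real.exp x / (1 + Real.exp x) := by
    unfold logistic
    rw [Real.exp_neg]
    have hx := Real.exp_pos x
    field_simp
    ring
  rw [h2, Real.sqrt_div (Real.exp_pos x).le, ← h1, Real.sqrt_sq (Real.exp_pos _).le]

lemma abstract_ineq (u v : ℝ) (hu0 : 0 < u) (hv0 : 0 < v) (hvu : v ≤ u) (hu1 : u ≤ 1) :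
    (u - v) / (2 * Real.sqrt 2)
      ≤ u / Real.sqrt (1 + u ^ 2) - v / Real.sqrt (1 + v ^ 2) := by
  have hv1 : v ≤ 1 := hvu.trans hu1
  have hp0 : 0 < Real.sqrt (1 + u ^ 2) := Real.sqrt_pos.2 (by positivity)
  have hq0 : 0 < Real.sqrt (1 + v ^ 2) := Real.sqrt_pos.2 (by positivity)
  have hr0 : 0 < Real.sqrt 2 := by positivity
  set p := Real.sqrt (1 + u ^ 2)
  set q := Real.sqrt (1 + v ^ 2)
  set r := Real.sqrt 2
  have hp2 : p ^ 2 = 1 + u ^ 2 := Real.sq_sqrt (by positivity)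
  have hq2 : q ^ 2 = 1 + v ^ 2 := Real.sq_sqrt (by positivity)
  have hr2 : r ^ 2 = 2 := Real.sq_sqrt (by norm_num)
  have hpr : p ≤ r := by apply Real.sqrt_le_sqrt; nlinarith
  have hqr : q ≤ r := by apply Real.sqrt_le_sqrt; nlinarith
  have hq2le : q ^ 2 ≤ 2 := by nlinarith
  have hp2le : p ^ 2 ≤ 2 := by nlinarith
  have hpq2r : p * q ^ 2 ≤ 2 * r := by
    have := mul_le_mul hpr hq2le (sq_nonneg q) hr0.le
    linarith
  have hp2qr : p ^ 2 * q ≤ 2 * r := by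
    have := mul_le_mul hp2le hqr hq0.le (by norm_num : (0:ℝ) ≤ 2)
    linarith
  have hnum : v * p ≤ u * q := by
    have e1 : v * p = Real.sqrt (v ^ 2 * (1 + u ^ 2)) := by
      rw [Real.sqrt_mul (sq_nonneg v), Real.sqrt_sq hv0.le]
    have e2 : u * q = Real.sqrt (u ^ 2 * (1 + v ^ 2)) := by
      rw [Real.sqrt_mul (sq_nonneg u), Real.sqrt_sq hu0.le]
    rw [e1, e2]
    apply Real.sqrt_le_sqrt
    nlinarith
  have hsum : 0 < u * q + v * p := by positivity
  have key : (u - v) * (p * q) * (u * q + v * p)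
      ≤ (u * q - v * p) * (2 * r) * (u * q + v * p) := by
    calc (u - v) * (p * q) * (u * q + v * p)
        = (u - v) * (u * (p * q ^ 2) + v * (p ^ 2 * q)) := by ring
      _ ≤ (u - v) * (u * (2 * r) + v * (2 * r)) := by
          apply mul_le_mul_of_nonneg_left _ (by linarith)
          have t1 : u * (p * q ^ 2) ≤ u * (2 * r) :=
            mul_le_mul_of_nonneg_left hpq2r hu0.le
          have t2 : v * (p ^ 2 * q) ≤ v * (2 * r) :=
            mul_le_mul_of_nonneg_left hp2qr hv0.le
          linarith
      _ = 2 * r * (u ^ 2 - v ^ 2) := by ring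
      _ = 2 * r * (u ^ 2 * q ^ 2 - v ^ 2 * p ^ 2) := by
          linear_combination (-2 * r * u ^ 2) * hq2 + (2 * r * v ^ 2) * hp2
      _ = (u * q - v * p) * (2 * r) * (u * q + v * p) := by ring
  rw [div_sub_div _ _ hp0.ne' hq0.ne', div_le_div_iff₀ (by positivity) (by positivity)]
  nlinarith [key, hsum]

lemma key_case (a b : ℝ) (hba : b ≤ a) (ha : a ≤ 0) :
    (1 / 32) * Real.exp b * (a - b) ^ 2
      ≤ (Real.sqrt (logistic a) - Real.sqrt (logistic b)) ^ 2 := by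
  have hu0 : 0 < Real.exp (a/2) := Real.exp_pos _
  have hv0 : 0 < Real.exp (b/2) := Real.exp_pos _
  have hvu : Real.exp (b/2) ≤ Real.exp (a/2) := Real.exp_le_exp.2 (by linarith)
  have hu1 : Real.exp (a/2) ≤ 1 := Real.exp_le_one_iff.2 (by linarith)
  have hr0 : 0 < Real.sqrt 2 := by positivity
  have hr2 : Real.sqrt 2 ^ 2 = 2 := Real.sq_sqrt (by norm_num)
  have hv2 : Real.exp (b/2) ^ 2 = Real.exp b := by rw [sq, ← Real.exp_add]; ring_nf
  have step2 := abstract_ineq (Real.exp (a/2)) (Real.exp (b/2)) hu0 hv0 hvu hu1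
  have step3 : Real.exp (b/2) * ((a - b) / 2) ≤ Real.exp (a/2) - Real.exp (b/2) := by
    have h := Real.add_one_le_exp ((a - b) / 2)
    have huv : Real.exp (a/2) = Real.exp (b/2) * Real.exp ((a - b) / 2) := by
      rw [← Real.exp_add]; ring_nf
    nlinarith
  have habnn : 0 ≤ a - b := by linarith
  have hlow : Real.exp (b/2) * (a - b) / (4 * Real.sqrt 2)
      ≤ Real.sqrt (logistic a) - Real.sqrt (logistic b) := by
    rw [sqrt_logistic_eq, sqrt_logistic_eq]
    calc Real.exp (b/2) * (a - b) / (4 * Real.sqrt 2)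
        = (Real.exp (b/2) * ((a - b) / 2)) / (2 * Real.sqrt 2) := by ring
      _ ≤ (Real.exp (a/2) - Real.exp (b/2)) / (2 * Real.sqrt 2) := by gcongr
      _ ≤ _ := step2
  have hlhs0 : 0 ≤ Real.exp (b/2) * (a - b) / (4 * Real.sqrt 2) := by positivity
  have hsq := pow_le_pow_left₀ hlhs0 hlow 2
  calc (1 / 32) * Real.exp b * (a - b) ^ 2
      = (Real.exp (b/2) * (a - b) / (4 * Real.sqrt 2)) ^ 2 := by
        rw [div_pow, mul_pow, mul_pow, hv2, hr2]; ring
    _ ≤ _ := hsq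

/-- For `a, b ≤ 0`, `(√σ(a) − √σ(b))² ≥ (1/32)·exp(min(a,b))·(a − b)²`. -/
theorem sq_sqrt_logistic_sub_ge (a b : ℝ) (ha : a ≤ 0) (hb : b ≤ 0) :
    (1 / 32) * Real.exp (min a b) * (a - b) ^ 2
      ≤ (Real.sqrt (logistic a) - Real.sqrt (logistic b)) ^ 2 := by
  rcases le_total b a with h | h
  · rw [min_eq_right h]; exact key_case a b h ha
  · rw [min_eq_left h]
    calc (1 / 32) * Real.exp a * (a - b) ^ 2
        = (1 / 32) * Real.exp a * (b - a) ^ 2 := by ring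
      _ ≤ (Real.sqrt (logistic b) - Real.sqrt (logistic a)) ^ 2 := key_case b a h hb
      _ = (Real.sqrt (logistic a) - Real.sqrt (logistic b)) ^ 2 := by ring
end

section
/- Let σ(x) = 1/(1+exp(−x)) be the logistic function and for real numbers a, b set p_a = σ(a), p_b = σ(b). For all a, b ≤ 0, the Rényi divergence of order 1/2 between Bernoulli(p_a) and Bernoulli(p_b) satisfies −2·log(√(p_a·p_b) + √((1−p_a)·(1−p_b))) ≥ (1/32) · exp(min(a,b)) · (a − b)². -/
open Real

theorem bernoulli_hellinger_le_renyi_half {p q : ℝ} (hp : 0 < p) (hq : 0 < q)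
    (hp₁ : p ≤ 1) (hq₁ : q ≤ 1) :
    (√p - √q) ^ 2 + (√(1 - p) - √(1 - q)) ^ 2
      ≤ -2 * log (√(p * q) + √((1 - p) * (1 - q))) := by
  set S := √(p * q) + √((1 - p) * (1 - q)) with hS_def
  have hS : 0 < S := by positivity
  have hellinger : (√p - √q) ^ 2 + (√(1 - p) - √(1 - q)) ^ 2 = 2 - 2 * S := by
    rw [hS_def, sqrt_mul hp.le, sqrt_mul (sub_nonneg.mpr hp₁)]
    linear_combination sq_sqrt hp.le + sq_sqrt hq.le + sq_sqrt (sub_nonneg.mpr hp₁)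
      + sq_sqrt (sub_nonneg.mpr hq₁)
  linarith [log_le_sub_one_of_pos hS]

theorem exp_min_mul_abs_sub_le_abs_exp_sub (x y : ℝ) :
    exp (min x y) * |x - y| ≤ |exp x - exp y| := by
  wlog hyx : y ≤ x generalizing x y
  · simpa only [min_comm, abs_sub_comm] using this y x (le_of_not_ge hyx)
  have h : exp y * (x - y) ≤ exp x - exp y := by
    have := mul_le_mul_of_nonneg_left (add_one_le_exp (x - y)) (exp_pos y).le
    rwa [mul_add, mul_one, ← exp_add, add_sub_cancel, ← le_sub_iff_add_le] at this
  rwa [min_eq_right hyx, abs_of_nonneg (sub_nonneg.mpr hyx),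
    abs_of_nonneg (sub_nonneg.mpr (exp_le_exp.mpr hyx))]

theorem sq_sub_le_eight_mul_sq_sub_div_sqrt_one_add_sq {u v : ℝ} (hu : 0 ≤ u) (hv : 0 ≤ v)
    (hu₁ : u ≤ 1) (hv₁ : v ≤ 1) :
    (u - v) ^ 2 ≤ 8 * (u / √(1 + u ^ 2) - v / √(1 + v ^ 2)) ^ 2 := by
  obtain huv | huv := (add_nonneg hu hv).eq_or_lt
  · obtain ⟨rfl, rfl⟩ : u = 0 ∧ v = 0 := ⟨by linarith, by linarith⟩
    simp
  set A := √(1 + u ^ 2)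
  set B := √(1 + v ^ 2)
  have hA : A ^ 2 = 1 + u ^ 2 := sq_sqrt (by positivity)
  have hB : B ^ 2 = 1 + v ^ 2 := sq_sqrt (by positivity)
  have hA₀ : 0 < A := sqrt_pos.mpr (by positivity)
  have hB₀ : 0 < B := sqrt_pos.mpr (by positivity)
  have factor : (u / A - v / B) * (A * B) * (u * B + v * A) = (u - v) * (u + v) := by
    field_simp
    linear_combination u ^ 2 * hB - v ^ 2 * hA
  have hAB : (A * B) ^ 2 ≤ 4 := by
    rw [mul_pow, hA, hB]
    nlinarith [pow_le_one₀ (n := 2) hu hu₁, pow_le_one₀ (n := 2) hv hv₁]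
  have hsum : (u * B + v * A) ^ 2 ≤ 2 * (u + v) ^ 2 := by
    nlinarith [sq_nonneg (u * B - v * A), mul_le_one₀ hu₁ hv hv₁, mul_nonneg hu hv]
  refine le_of_mul_le_mul_right ?_ (pow_pos huv 2)
  calc (u - v) ^ 2 * (u + v) ^ 2
      = (u / A - v / B) ^ 2 * (A * B) ^ 2 * (u * B + v * A) ^ 2 := by
        rw [← mul_pow, ← factor]; ring
    _ ≤ (u / A - v / B) ^ 2 * 4 * (2 * (u + v) ^ 2) := by gcongr
    _ = 8 * (u / A - v / B) ^ 2 * (u + v) ^ 2 := by ring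

theorem sqrt_logistic (x : ℝ) : √(logistic x) = exp (x / 2) / √(1 + exp (x / 2) ^ 2) := by
  have hsq : exp (x / 2) ^ 2 = exp x := by rw [← exp_nat_mul]; ring_nf
  have h : logistic x = exp (x / 2) ^ 2 / (1 + exp (x / 2) ^ 2) := by
    rw [hsq, logistic, exp_neg]
    field_simp
    ring
  rw [h, sqrt_div' _ (by positivity), sqrt_sq (exp_pos _).le]

theorem logistic_pos (x : ℝ) : 0 < logistic x := by
  unfold logistic
  positivity

theorem logistic_le_one (x : ℝ) : logistic x ≤ 1 := by
  unfold logistic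
  rw [div_le_one (by positivity)]
  linarith [exp_pos (-x)]

/-- For `a, b ≤ 0`, the Rényi divergence of order 1/2 between Bernoulli(σ(a)) and
Bernoulli(σ(b)) is at least `(1/32)·exp(min(a,b))·(a − b)²`. -/
theorem renyi_half_logistic_lower_bound (a b : ℝ) (ha : a ≤ 0) (hb : b ≤ 0) :
    (1 / 32) * Real.exp (min a b) * (a - b) ^ 2
      ≤ -2 * Real.log (Real.sqrt (logistic a * logistic b)
          + Real.sqrt ((1 - logistic a) * (1 - logistic b))) := by
  have hexp := exp_min_mul_abs_sub_le_abs_exp_sub (a / 2) (b / 2)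
  have hslope := sq_sub_le_eight_mul_sq_sub_div_sqrt_one_add_sq (exp_pos (a / 2)).le
    (exp_pos (b / 2)).le (exp_le_one_iff.mpr (by linarith)) (exp_le_one_iff.mpr (by linarith))
  calc (1 / 32) * exp (min a b) * (a - b) ^ 2
      = (exp (min (a / 2) (b / 2)) * |a / 2 - b / 2|) ^ 2 / 8 := by
        rw [min_div_div_right zero_le_two, mul_pow, sq_abs, ← exp_nat_mul]
        ring_nf
    _ ≤ (exp (a / 2) - exp (b / 2)) ^ 2 / 8 := by
        rw [← sq_abs (exp _ - _)]
        gcongr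
    _ ≤ (√(logistic a) - √(logistic b)) ^ 2 := by
        rw [sqrt_logistic, sqrt_logistic]
        linarith
    _ ≤ _ := by
        have := bernoulli_hellinger_le_renyi_half (logistic_pos a) (logistic_pos b)
          (logistic_le_one a) (logistic_le_one b)
        linarith [sq_nonneg (√(1 - logistic a) - √(1 - logistic b))]
end

section
/- For every real number λ > 0, ∫₀^∞ [2λ · v^{−1/2}·λ^{−3}·exp(−1/(v·λ²))/√π] · [v^{−3/2}·exp(−1/v)/√π] dv = 2/(π·(1+λ²)). In other words, mixing the density of λ obtained from λ² | v ~ InverseGamma(1/2, 1/v) over v ~ InverseGamma(1/2, 1) yields the half-Cauchy density 2/(π·(1+λ²)). -/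
/-!
Up to the constant `2 / (π l²)`, the product of the two densities is the inverse-gamma kernel
`v⁻² exp (-c / v)` with `c = 1 + 1 / l²`. The substitution `v ↦ v⁻¹` turns it into a Gamma
integral, so it integrates to `Γ(1) / c = l² / (1 + l²)`.
-/

open MeasureTheory Set Real

theorem integral_rpow_mul_exp_neg_div_Ioi {a r : ℝ} (ha : 0 < a) (hr : 0 < r) :
    ∫ v in Ioi 0, v ^ (-a - 1) * exp (-(r / v)) = (1 / r) ^ a * Gamma a := by
  rw [← integral_rpow_mul_exp_neg_mul_Ioi ha hr,
    ← integral_comp_rpow_Ioi _ (neg_ne_zero.mpr one_ne_zero)]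
  refine setIntegral_congr_fun measurableSet_Ioi fun t (ht : 0 < t) ↦ ?_
  rw [rpow_neg_one, inv_rpow ht.le, ← rpow_neg ht.le, abs_neg, abs_one, one_mul, smul_eq_mul,
    ← mul_assoc, ← rpow_add ht, div_inv_eq_mul]
  ring_nf

theorem invGamma_mixture_integrand_eq {l v : ℝ} (hl : l ≠ 0) (hv : 0 < v) :
    (2 * l * v ^ (-(1 / 2) : ℝ) * l ^ (-3 : ℤ) * exp (-1 / (v * l ^ 2)) / √π)
        * (v ^ (-(3 / 2) : ℝ) * exp (-1 / v) / √π)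
      = 2 / (π * l ^ 2) * (v ^ (-1 - 1 : ℝ) * exp (-((1 + 1 / l ^ 2) / v))) := by
  have hv_pow : v ^ (-(1 / 2) : ℝ) * v ^ (-(3 / 2) : ℝ) = v ^ (-1 - 1 : ℝ) := by
    rw [← rpow_add hv]; norm_num
  have hexp : exp (-1 / (v * l ^ 2)) * exp (-1 / v) = exp (-((1 + 1 / l ^ 2) / v)) := by
    rw [← exp_add]; congr 1; field_simp; ring
  calc _ = 2 * l * l ^ (-3 : ℤ) / (√π * √π) * (v ^ (-(1 / 2) : ℝ) * v ^ (-(3 / 2) : ℝ))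
        * (exp (-1 / (v * l ^ 2)) * exp (-1 / v)) := by ring
    _ = _ := by
      rw [hv_pow, hexp, mul_self_sqrt pi_pos.le, zpow_neg]
      field_simp

/-- Mixing the density of `λ` obtained from `λ² | v ~ InverseGamma(1/2, 1/v)` over
`v ~ InverseGamma(1/2, 1)` yields the half-Cauchy density `2/(π·(1+λ²))`. -/
theorem invGamma_mixture_eq_halfCauchy (l : ℝ) (hl : 0 < l) :
    ∫ v in Set.Ioi (0 : ℝ),
        (2 * l * v ^ (-(1 / 2) : ℝ) * l ^ (-3 : ℤ) * Real.exp (-1 / (v * l ^ 2))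
            / Real.sqrt Real.pi)
          * (v ^ (-(3 / 2) : ℝ) * Real.exp (-1 / v) / Real.sqrt Real.pi)
      = 2 / (Real.pi * (1 + l ^ 2)) := by
  rw [setIntegral_congr_fun measurableSet_Ioi fun v hv ↦
      invGamma_mixture_integrand_eq hl.ne' hv,
    integral_const_mul, integral_rpow_mul_exp_neg_div_Ioi one_pos (by positivity),
    Gamma_one, rpow_one]
  field_simp
  ring
end

section
/- Let U₁, U₂ be real n × d matrices, and let σ_d(U₂) denote the smallest singular value of U₂ (the square root of the smallest eigenvalue of U₂ᵀU₂). If σ_d(U₂) > 0, then the orthogonal-Procrustes discrepancy satisfies min over O in the d × d real orthogonal group of ‖U₁ − U₂·O‖_F² ≤ (1/(2(√2 − 1)·σ_d(U₂)²)) · ‖U₁·U₁ᵀ − U₂·U₂ᵀ‖_F². -/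
/-!
Choose `O` maximizing `tr (Oᵀ U₂ᵀ U₁)` over the compact orthogonal group. Optimality against
plane rotations and Householder reflections makes `B = (U₂ O)ᵀ U₁` symmetric positive
semidefinite. Put `X = U₂ O` (so `X Xᵀ = U₂ U₂ᵀ`), `Δ = U₁ - X`, `D = Δᵀ Δ`, `S = Δᵀ X`. Then
`‖U₁ U₁ᵀ - X Xᵀ‖² = tr D² + 2 tr (Xᵀ X D) + 2 tr S² + 4 tr (D S)`, where
`tr (D S) + tr (Xᵀ X D) = tr (D B) ≥ 0` and `tr (D S)² ≤ tr D² tr S²`; AM-GM bounds the sum below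
by `2 (√2 - 1) tr (Xᵀ X D) ≥ 2 (√2 - 1) σ_d² ‖Δ‖²`.
-/

open Matrix

/-- The Frobenius norm of a real matrix. -/
noncomputable def frobNorm {n d : ℕ} (A : Matrix (Fin n) (Fin d) ℝ) : ℝ :=
  Real.sqrt (∑ i, ∑ j, A i j ^ 2)

lemma two_mul_sqrt_two_sub_one_mul_le {p q s t : ℝ} (hp : 0 ≤ p) (hq : 0 ≤ q)
    (hs : s ^ 2 ≤ p * q) (hst : 0 ≤ s + t) :
    2 * (√2 - 1) * t ≤ p + 2 * t + 2 * q + 4 * s := by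
  have h2 : √2 ^ 2 = 2 := Real.sq_sqrt zero_le_two
  have hle : √2 ≤ 2 := by nlinarith [Real.sqrt_nonneg 2]
  -- AM-GM: `p + 2 q ≥ 2 √(2 p q) ≥ 2 √2 |s|`
  have hs' : -(p + 2 * q) ≤ 2 * √2 * s :=
    (abs_le_of_sq_le_sq' (by nlinarith [sq_nonneg (p - 2 * q)]) (by positivity)).1
  nlinarith [mul_nonneg (sub_nonneg.2 hle) hst]

namespace Matrix

section Trace

variable {m n : Type*} [Fintype m] [Fintype n]

lemma sq_trace_transpose_mul_le (A B : Matrix m n ℝ) :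
    (Aᵀ * B).trace ^ 2 ≤ (Aᵀ * A).trace * (Bᵀ * B).trace := by
  simp only [trace, diag, transpose_apply, mul_apply, ← Finset.sum_product']
  simpa only [sq] using
    Finset.sum_mul_sq_le_sq_mul_sq _ (fun p : n × m => A p.2 p.1) (fun p => B p.2 p.1)

lemma PosSemidef.trace_mul_nonneg {P Q : Matrix m m ℝ} (hP : P.PosSemidef) (hQ : Q.PosSemidef) :
    0 ≤ (P * Q).trace := by
  obtain ⟨k, v, rfl⟩ := posSemidef_iff_eq_sum_vecMulVec.mp hQ
  simp only [Matrix.mul_sum, trace_sum, mul_vecMulVec, trace_vecMulVec]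
  exact Finset.sum_nonneg fun l _ => by
    simpa [dotProduct_comm] using hP.dotProduct_mulVec_nonneg (v l)

lemma trace_sq_mul_transpose_add_sub {X Δ : Matrix n m ℝ} (hXΔ : Xᵀ * Δ = Δᵀ * X) :
    let E := (X + Δ) * (X + Δ)ᵀ - X * Xᵀ
    (Eᵀ * E).trace = (Δᵀ * Δ * (Δᵀ * Δ)).trace + 2 * (Xᵀ * X * (Δᵀ * Δ)).trace
      + 2 * (Δᵀ * X * (Δᵀ * X)).trace + 4 * (Δᵀ * Δ * (Δᵀ * X)).trace := by
  intro E
  have hE : E = Δ * Δᵀ + Δ * Xᵀ + X * Δᵀ := by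
    simp only [E, transpose_add, Matrix.add_mul, Matrix.mul_add]; abel
  have hcyc : ∀ P Q R S : Matrix n m ℝ, (P * Qᵀ * (R * Sᵀ)).trace = (Qᵀ * R * (Sᵀ * P)).trace :=
    fun P Q R S => by rw [Matrix.mul_assoc, trace_mul_comm]; simp only [Matrix.mul_assoc]
  rw [hE]
  simp only [transpose_add, transpose_mul, transpose_transpose, Matrix.add_mul, Matrix.mul_add,
    trace_add, hcyc, hXΔ]
  rw [trace_mul_comm (Δᵀ * X) (Δᵀ * Δ), trace_mul_comm (Δᵀ * Δ) (Xᵀ * X)]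
  ring

end Trace

variable {m : Type*} [Fintype m] [DecidableEq m]

lemma IsHermitian.posSemidef_sub_smul_one {A : Matrix m m ℝ} (hA : A.IsHermitian) {c : ℝ}
    (hc : ∀ i, c ≤ hA.eigenvalues i) : (A - c • 1).PosSemidef := by
  refine posSemidef_iff_isHermitian_and_spectrum_nonneg.2 ⟨hA.sub (by simp [IsHermitian]), ?_⟩
  rw [← Algebra.algebraMap_eq_smul_one, ← spectrum.sub_singleton_eq,
    hA.spectrum_real_eq_range_eigenvalues]
  rintro _ ⟨_, ⟨i, rfl⟩, _, rfl, rfl⟩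
  exact sub_nonneg.2 (hc i)

lemma isCompact_setOf_transpose_mul_self_eq_one :
    IsCompact {O : Matrix m m ℝ | Oᵀ * O = 1} :=
  (isCompact_univ_pi fun _ => isCompact_univ_pi fun _ => isCompact_Icc (a := (-1 : ℝ)) (b := 1))
    |>.of_isClosed_subset (isClosed_eq (by fun_prop) continuous_const) fun O hO i _ j _ =>
      abs_le.mp (entry_norm_bound_of_unitary (mem_unitaryGroup_iff'.2 hO) i j)

noncomputable def rodriguesRotation (K : Matrix m m ℝ) (θ : ℝ) : Matrix m m ℝ :=
  1 + Real.sin θ • K + (1 - Real.cos θ) • K ^ 2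

lemma rodriguesRotation_transpose_mul_self {K : Matrix m m ℝ} (hK : Kᵀ = -K) (hK3 : K ^ 3 = -K)
    (θ : ℝ) : (rodriguesRotation K θ)ᵀ * rodriguesRotation K θ = 1 := by
  have hK4 : (K ^ 2) ^ 2 = -K ^ 2 := by rw [← pow_mul, pow_succ, hK3, neg_mul, ← sq]
  simp only [rodriguesRotation, transpose_add, transpose_smul, transpose_one, transpose_pow, hK,
    neg_pow_two, add_mul, mul_add, one_mul, mul_one, smul_mul_assoc, mul_smul_comm, ← pow_succ,
    ← pow_succ', neg_mul, hK3, ← sq, hK4]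
  linear_combination (norm := module) -(Real.sin_sq_add_cos_sq θ) • K ^ 2

lemma trace_mul_eq_zero_of_forall_trace_le {B : Matrix m m ℝ}
    (hB : ∀ W : Matrix m m ℝ, Wᵀ * W = 1 → (Wᵀ * B).trace ≤ B.trace)
    {K : Matrix m m ℝ} (hK : Kᵀ = -K) (hK3 : K ^ 3 = -K) : (K * B).trace = 0 := by
  have htrace : ∀ θ, ((rodriguesRotation K θ)ᵀ * B).trace
      = B.trace - Real.sin θ * (K * B).trace + (1 - Real.cos θ) * (K ^ 2 * B).trace := by
    intro θ
    simp only [rodriguesRotation, transpose_add, transpose_smul, transpose_one, transpose_pow, hK,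
      neg_pow_two, smul_neg, add_mul, neg_mul, smul_mul_assoc, one_mul, trace_add, trace_neg,
      trace_smul, smul_eq_mul]
    ring
  have hmax : IsLocalMax (fun θ => ((rodriguesRotation K θ)ᵀ * B).trace) 0 :=
    Filter.Eventually.of_forall fun θ => by
      simpa [rodriguesRotation] using hB _ (rodriguesRotation_transpose_mul_self hK hK3 θ)
  have hderiv : HasDerivAt (fun θ => ((rodriguesRotation K θ)ᵀ * B).trace) (-(K * B).trace) 0 := by
    simp only [htrace]
    simpa using (((Real.hasDerivAt_sin 0).mul_const (K * B).trace).const_sub B.trace).fun_add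
      (((Real.hasDerivAt_cos 0).const_sub 1).mul_const (K ^ 2 * B).trace)
  simpa using hmax.hasDerivAt_eq_zero hderiv

lemma isSymm_of_forall_trace_le {B : Matrix m m ℝ}
    (hB : ∀ W : Matrix m m ℝ, Wᵀ * W = 1 → (Wᵀ * B).trace ≤ B.trace) : B.IsSymm := by
  ext i j
  rcases eq_or_ne i j with rfl | hij
  · rfl
  set K : Matrix m m ℝ := single j i 1 - single i j 1
  have hK : Kᵀ = -K := by rw [transpose_sub, transpose_single, transpose_single, neg_sub]
  have hK3 : K ^ 3 = -K := by
    simp [K, pow_succ, sub_mul, mul_sub, single_mul_single_same, single_mul_single_of_ne, hij,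
      hij.symm, neg_add_eq_sub]
  have := trace_mul_eq_zero_of_forall_trace_le hB hK hK3
  simp only [K, sub_mul, trace_sub, trace_single_mul, smul_eq_mul, one_mul] at this
  exact (sub_eq_zero.1 this).symm

-- At `y = 0` the junk value `2 / 0 = 0` makes this `1`, so `householder_mul_self` needs no `y ≠ 0`.
noncomputable def householder (y : m → ℝ) : Matrix m m ℝ :=
  1 - (2 / (y ⬝ᵥ y)) • vecMulVec y y

lemma householder_transpose (y : m → ℝ) : (householder y)ᵀ = householder y := by
  simp [householder, transpose_smul, transpose_vecMulVec]

lemma householder_mul_self (y : m → ℝ) : householder y * householder y = 1 := by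
  rcases eq_or_ne y 0 with rfl | hy
  · simp [householder]
  have hyy : y ⬝ᵥ y ≠ 0 := dotProduct_self_eq_zero.not.2 hy
  have hcoef : 2 / (y ⬝ᵥ y) * (2 / (y ⬝ᵥ y)) * (y ⬝ᵥ y) = 2 * (2 / (y ⬝ᵥ y)) := by
    field_simp
  simp only [householder, sub_mul, mul_sub, one_mul, mul_one, smul_mul_smul_comm,
    vecMulVec_mul_vecMulVec, vecMulVec_smul, smul_smul, hcoef]
  module

lemma trace_householder_mul (y : m → ℝ) (B : Matrix m m ℝ) :
    (householder y * B).trace = B.trace - 2 / (y ⬝ᵥ y) * (y ⬝ᵥ B *ᵥ y) := by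
  rw [householder, sub_mul, one_mul, smul_mul_assoc, trace_sub, trace_smul, vecMulVec_mul,
    trace_vecMulVec, dotProduct_mulVec, dotProduct_comm (y ᵥ* B), smul_eq_mul]

lemma dotProduct_mulVec_nonneg_of_forall_trace_le {B : Matrix m m ℝ}
    (hB : ∀ W : Matrix m m ℝ, Wᵀ * W = 1 → (Wᵀ * B).trace ≤ B.trace) (y : m → ℝ) :
    0 ≤ y ⬝ᵥ B *ᵥ y := by
  rcases eq_or_ne y 0 with rfl | hy
  · simp
  have hyy : 0 < y ⬝ᵥ y := by simpa using dotProduct_self_star_pos_iff.2 hy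
  have := hB (householder y) (by rw [householder_transpose, householder_mul_self])
  rw [householder_transpose, trace_householder_mul, sub_le_self_iff] at this
  exact nonneg_of_mul_nonneg_right this (by positivity)

lemma posSemidef_of_forall_trace_le {B : Matrix m m ℝ}
    (hB : ∀ W : Matrix m m ℝ, Wᵀ * W = 1 → (Wᵀ * B).trace ≤ B.trace) : B.PosSemidef :=
  .of_dotProduct_mulVec_nonneg (isHermitian_iff_isSymm.2 (isSymm_of_forall_trace_le hB))
    fun y => by simpa using dotProduct_mulVec_nonneg_of_forall_trace_le hB y

lemma exists_orthogonal_posSemidef_transpose_mul (A : Matrix m m ℝ) :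
    ∃ O : Matrix m m ℝ, Oᵀ * O = 1 ∧ (Oᵀ * A).PosSemidef := by
  obtain ⟨O, hO, hmax⟩ := isCompact_setOf_transpose_mul_self_eq_one.exists_isMaxOn
    ⟨1, by simp⟩ (by fun_prop : Continuous fun O : Matrix m m ℝ => (Oᵀ * A).trace).continuousOn
  refine ⟨O, hO, posSemidef_of_forall_trace_le fun W hW => ?_⟩
  have hOW : (O * W)ᵀ * (O * W) = 1 := by
    rw [transpose_mul, Matrix.mul_assoc, ← Matrix.mul_assoc Oᵀ, hO, Matrix.one_mul, hW]
  simpa [transpose_mul, Matrix.mul_assoc] using hmax hOW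

end Matrix

lemma frobNorm_sq_eq_trace {n d : ℕ} (A : Matrix (Fin n) (Fin d) ℝ) :
    frobNorm A ^ 2 = (Aᵀ * A).trace := by
  rw [frobNorm, Real.sq_sqrt (by positivity), trace, Finset.sum_comm]
  simp [mul_apply, sq]

lemma mul_frobNorm_sq_le_of_posSemidef {n d : ℕ} {X Δ : Matrix (Fin n) (Fin d) ℝ} {c : ℝ}
    (hB : (Xᵀ * (X + Δ)).PosSemidef) (hc : (Xᵀ * X - c • 1).PosSemidef) :
    2 * (√2 - 1) * c * frobNorm Δ ^ 2 ≤ frobNorm ((X + Δ) * (X + Δ)ᵀ - X * Xᵀ) ^ 2 := by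
  set D := Δᵀ * Δ
  set S := Δᵀ * X
  have hD : D.PosSemidef := by simpa using posSemidef_conjTranspose_mul_self Δ
  have hXΔ : Xᵀ * Δ = S := by
    have h := hB.isHermitian.eq
    simp only [conjTranspose_eq_transpose_of_trivial, transpose_mul, transpose_add,
      transpose_transpose, Matrix.mul_add, add_right_inj] at h
    exact h.symm
  have hDt : Dᵀ = D := by simp [D]
  have hSt : Sᵀ = S := by rw [← hXΔ, transpose_mul, transpose_transpose]; exact hXΔ.symm
  have hCS : (D * S).trace ^ 2 ≤ (D * D).trace * (S * S).trace := by
    simpa only [hDt, hSt] using sq_trace_transpose_mul_le D S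
  have hDD : 0 ≤ (D * D).trace := by
    simpa only [frobNorm_sq_eq_trace, hDt] using sq_nonneg (frobNorm D)
  have hSS : 0 ≤ (S * S).trace := by
    simpa only [frobNorm_sq_eq_trace, hSt] using sq_nonneg (frobNorm S)
  have hDB : 0 ≤ (D * S).trace + (Xᵀ * X * D).trace := by
    have := hD.trace_mul_nonneg hB
    rwa [Matrix.mul_add, Matrix.mul_add, trace_add, hXΔ, trace_mul_comm D (Xᵀ * X),
      add_comm] at this
  have hgram : c * D.trace ≤ (Xᵀ * X * D).trace := by
    have := hc.trace_mul_nonneg hD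
    rwa [Matrix.sub_mul, trace_sub, smul_mul_assoc, Matrix.one_mul, trace_smul, smul_eq_mul,
      sub_nonneg] at this
  have hsqrt : 0 ≤ √2 - 1 := by simp [Real.one_le_sqrt]
  rw [frobNorm_sq_eq_trace, frobNorm_sq_eq_trace, trace_sq_mul_transpose_add_sub hXΔ]
  calc 2 * (√2 - 1) * c * D.trace ≤ 2 * (√2 - 1) * (Xᵀ * X * D).trace := by
        rw [mul_assoc]; gcongr
    _ ≤ _ := two_mul_sqrt_two_sub_one_mul_le hDD hSS hCS hDB

/-- Perturbation bound for orthogonal Procrustes (Lemma 5.4 in Tu et al. (2016)):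
if the smallest singular value `σ_d(U₂)` (the square root of the smallest eigenvalue of
`U₂ᵀU₂`) is positive, then
`min_{O orthogonal} ‖U₁ − U₂·O‖_F² ≤ ‖U₁U₁ᵀ − U₂U₂ᵀ‖_F² / (2(√2 − 1)·σ_d(U₂)²)`. -/
theorem procrustes_perturbation_bound {n d : ℕ}
    (U₁ U₂ : Matrix (Fin n) (Fin d) ℝ)
    (hM : (U₂ᵀ * U₂).IsHermitian) (σd : ℝ)
    (hσd : σd = Real.sqrt (⨅ i, hM.eigenvalues i)) (hpos : 0 < σd) :
    sInf {x : ℝ | ∃ O : Matrix (Fin d) (Fin d) ℝ, Oᵀ * O = 1 ∧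
        x = frobNorm (U₁ - U₂ * O) ^ 2}
      ≤ 1 / (2 * (Real.sqrt 2 - 1) * σd ^ 2)
          * frobNorm (U₁ * U₁ᵀ - U₂ * U₂ᵀ) ^ 2 := by
  obtain ⟨O, hO, hB⟩ := exists_orthogonal_posSemidef_transpose_mul (U₂ᵀ * U₁)
  have hσ : σd ^ 2 = ⨅ i, hM.eigenvalues i :=
    hσd ▸ Real.sq_sqrt (Real.sqrt_pos.1 (hσd ▸ hpos)).le
  have hgram : ((U₂ * O)ᵀ * (U₂ * O) - σd ^ 2 • 1).PosSemidef := by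
    have := (hM.posSemidef_sub_smul_one fun i => hσ ▸ ciInf_le (Finite.bddBelow_range _) i)
      |>.conjTranspose_mul_mul_same O
    simpa [Matrix.mul_sub, Matrix.sub_mul, transpose_mul, Matrix.mul_assoc, hO] using this
  have hbound := mul_frobNorm_sq_le_of_posSemidef (Δ := U₁ - U₂ * O)
    (by simpa [transpose_mul, Matrix.mul_assoc] using hB) hgram
  have hXX : U₂ * O * (U₂ * O)ᵀ = U₂ * U₂ᵀ := by
    rw [transpose_mul, Matrix.mul_assoc, ← Matrix.mul_assoc O, mul_eq_one_comm.1 hO,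
      Matrix.one_mul]
  rw [add_sub_cancel, hXX] at hbound
  have hden : 0 < 2 * (√2 - 1) * σd ^ 2 := by
    have : 0 < √2 - 1 := by simp [Real.lt_sqrt]
    positivity
  refine le_trans (csInf_le ⟨0, ?_⟩ ⟨O, hO, rfl⟩) ?_
  · rintro _ ⟨_, _, rfl⟩
    positivity
  · rw [one_div_mul_eq_div, le_div_iff₀ hden]
    linarith
end

section
/- Let Û, U be real n × d matrices such that U = Θ·X where Θ is an n × K membership matrix and X is a K × d matrix. Let (Θ̂, X̂) be a minimizer of ‖Θ'·X' − Û‖_F² over all pairs (Θ', X') with Θ' an n × K membership matrix and X' ∈ ℝ^{K×d}, and set Ū = Θ̂·X̂. For each k ∈ {1,…,K}, let δ_k > 0 satisfy δ_k ≤ min over l ≠ k of ‖X_l − X_k‖₂ (rows of X), let G_k(Θ) = {i : Θ_{ik} = 1}, and let S_k = {i ∈ G_k(Θ) : ‖Ū_i − U_i‖₂ ≥ δ_k/2} where Ū_i, U_i denote the i-th rows. Then Σ_{k=1}^{K} |S_k|·δ_k² ≤ 16·‖Û − U‖_F². -/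
open Matrix

/-- A 0/1-valued matrix with exactly one entry equal to 1 in each row. -/
def IsMembershipMatrix {n K : ℕ} (Θ : Matrix (Fin n) (Fin K) ℝ) : Prop :=
  (∀ i k, Θ i k = 0 ∨ Θ i k = 1) ∧ ∀ i, ∃! k, Θ i k = 1

/-- The Euclidean norm of a vector in `ℝ^d`. -/
noncomputable def euclNorm {d : ℕ} (v : Fin d → ℝ) : ℝ :=
  Real.sqrt (∑ j, v j ^ 2)

lemma frob_sq {m p : ℕ} (A : Matrix (Fin m) (Fin p) ℝ) :
    frobNorm A ^ 2 = ∑ i, ∑ j, A i j ^ 2 := by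
  unfold frobNorm
  exact Real.sq_sqrt (by positivity)

lemma eucl_sq {p : ℕ} (v : Fin p → ℝ) : euclNorm v ^ 2 = ∑ j, v j ^ 2 := by
  unfold euclNorm
  exact Real.sq_sqrt (by positivity)

/-- K-means error bound (Lemma 5.3 of Lei & Rinaldo (2015)):
if `U = Θ·X` with `Θ` a membership matrix, `(Θ̂, X̂)` minimizes `‖Θ'X' − Û‖_F²` over
membership matrices `Θ'` and `X' ∈ ℝ^{K×d}`, `Ū = Θ̂·X̂`, `δ_k ≤ min_{l ≠ k} ‖X_l − X_k‖₂`,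
and `S_k = {i ∈ G_k(Θ) : ‖Ū_i − U_i‖₂ ≥ δ_k/2}`, then
`∑_k |S_k|·δ_k² ≤ 16·‖Û − U‖_F²`. -/
theorem kmeans_error_bound {n K d : ℕ}
    (Uhat : Matrix (Fin n) (Fin d) ℝ)
    (Θ : Matrix (Fin n) (Fin K) ℝ) (X : Matrix (Fin K) (Fin d) ℝ)
    (hΘ : IsMembershipMatrix Θ)
    (U : Matrix (Fin n) (Fin d) ℝ) (hU : U = Θ * X)
    (Θhat : Matrix (Fin n) (Fin K) ℝ) (Xhat : Matrix (Fin K) (Fin d) ℝ)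
    (hΘhat : IsMembershipMatrix Θhat)
    (hmin : ∀ (Θ' : Matrix (Fin n) (Fin K) ℝ) (X' : Matrix (Fin K) (Fin d) ℝ),
      IsMembershipMatrix Θ' →
        frobNorm (Θhat * Xhat - Uhat) ^ 2 ≤ frobNorm (Θ' * X' - Uhat) ^ 2)
    (Ubar : Matrix (Fin n) (Fin d) ℝ) (hUbar : Ubar = Θhat * Xhat)
    (δ : Fin K → ℝ) (hδpos : ∀ k, 0 < δ k)
    (hδsep : ∀ k l, l ≠ k → δ k ≤ euclNorm (X l - X k))
    (S : Fin K → Set (Fin n))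
    (hS : ∀ k, S k = {i | Θ i k = 1 ∧ δ k / 2 ≤ euclNorm (Ubar i - U i)}) :
    ∑ k, ((S k).ncard : ℝ) * δ k ^ 2 ≤ 16 * frobNorm (Uhat - U) ^ 2 := by
  classical
  set f : Fin n → ℝ := fun i => ∑ j, (Ubar i j - Uhat i j) ^ 2 with hfdef
  set g : Fin n → ℝ := fun i => ∑ j, (Uhat i j - U i j) ^ 2 with hgdef
  have hf : ∀ i, 0 ≤ f i := fun i => Finset.sum_nonneg fun j _ => sq_nonneg _
  have hg : ∀ i, 0 ≤ g i := fun i => Finset.sum_nonneg fun j _ => sq_nonneg _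
  set h : Fin n → ℝ := fun i => 8 * (f i + g i) with hhdef
  have hh : ∀ i, 0 ≤ h i := fun i => by
    have := hf i; have := hg i; simp only [hhdef]; linarith
  -- per-row bound
  have hrow : ∀ k, ∀ i ∈ S k, δ k ^ 2 ≤ h i := by
    intro k i hi
    rw [hS k] at hi
    obtain ⟨-, hdist⟩ := hi
    have hδ2 : (0:ℝ) ≤ δ k / 2 := by linarith [(hδpos k).le]
    have h1 : (δ k / 2) ^ 2 ≤ euclNorm (Ubar i - U i) ^ 2 :=
      pow_le_pow_left₀ hδ2 hdist 2
    rw [eucl_sq] at h1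
    have h2 : ∑ j, (Ubar i - U i) j ^ 2 ≤ 2 * (f i + g i) := by
      have hterm : ∀ j ∈ Finset.univ, (Ubar i - U i) j ^ 2 ≤
          2 * ((Ubar i j - Uhat i j) ^ 2 + (Uhat i j - U i j) ^ 2) := by
        intro j _
        simp only [Pi.sub_apply]
        nlinarith [sq_nonneg ((Ubar i j - Uhat i j) - (Uhat i j - U i j))]
      calc ∑ j, (Ubar i - U i) j ^ 2
          ≤ ∑ j, 2 * ((Ubar i j - Uhat i j) ^ 2 + (Uhat i j - U i j) ^ 2) :=
            Finset.sum_le_sum hterm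
        _ = 2 * (f i + g i) := by
            simp only [hfdef, hgdef, Finset.mul_sum, ← Finset.sum_add_distrib]
            try (congr 1; ext j; ring)
    simp only [hhdef]
    nlinarith
  -- disjointness: each i belongs to at most one S k
  have hdisj : ∀ i : Fin n, ∑ k, (if i ∈ S k then h i else 0) ≤ h i := by
    intro i
    obtain ⟨k₀, hk₀, huniq⟩ := hΘ.2 i
    have hzero : ∀ k ∈ Finset.univ, k ≠ k₀ → (if i ∈ S k then h i else 0) = 0 := by
      intro k _ hk
      rw [if_neg]
      intro hmem
      rw [hS k] at hmem
      exact hk (huniq k hmem.1)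
    rw [Finset.sum_eq_single k₀ hzero (fun hc => absurd (Finset.mem_univ k₀) hc)]
    split_ifs
    · exact le_refl _
    · exact hh i
  -- cardinality bound per cluster
  have hcard : ∀ k, ((S k).ncard : ℝ) * δ k ^ 2 ≤ ∑ i, (if i ∈ S k then h i else 0) := by
    intro k
    have hT : (S k).ncard = ((S k).toFinset).card := Set.ncard_eq_toFinset_card' _
    have : ((S k).toFinset).card • (δ k ^ 2) ≤ ∑ i ∈ (S k).toFinset, h i :=
      Finset.card_nsmul_le_sum _ _ _ (fun i hi => hrow k i (Set.mem_toFinset.mp hi))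
    have heq : ∑ i, (if i ∈ S k then h i else 0) = ∑ i ∈ (S k).toFinset, h i := by
      rw [← Finset.sum_filter]
      congr 1
      ext i
      simp [Set.mem_toFinset]
    rw [hT, heq]
    simpa [nsmul_eq_mul] using this
  have hsum : ∑ k, ((S k).ncard : ℝ) * δ k ^ 2 ≤ ∑ i, h i := by
    calc ∑ k, ((S k).ncard : ℝ) * δ k ^ 2
        ≤ ∑ k, ∑ i, (if i ∈ S k then h i else 0) :=
          Finset.sum_le_sum fun k _ => hcard k
      _ = ∑ i, ∑ k, (if i ∈ S k then h i else 0) := Finset.sum_comm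
      _ ≤ ∑ i, h i := Finset.sum_le_sum fun i _ => hdisj i
  -- relate ∑ h to Frobenius norms
  have hhsum : ∑ i, h i = 8 * (frobNorm (Ubar - Uhat) ^ 2 + frobNorm (Uhat - U) ^ 2) := by
    rw [frob_sq, frob_sq]
    simp only [hhdef, hfdef, hgdef, Matrix.sub_apply, Finset.mul_sum, ← Finset.sum_add_distrib]
    try (congr 1; ext i; ring)
  -- minimality
  have hminU : frobNorm (Ubar - Uhat) ^ 2 ≤ frobNorm (Uhat - U) ^ 2 := by
    have := hmin Θ X hΘ
    rw [← hU, ← hUbar] at this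
    have hsymm : frobNorm (U - Uhat) ^ 2 = frobNorm (Uhat - U) ^ 2 := by
      rw [frob_sq, frob_sq]
      apply Finset.sum_congr rfl
      intro i _
      apply Finset.sum_congr rfl
      intro j _
      simp only [Matrix.sub_apply]
      ring
    linarith
  calc ∑ k, ((S k).ncard : ℝ) * δ k ^ 2 ≤ ∑ i, h i := hsum
    _ = 8 * (frobNorm (Ubar - Uhat) ^ 2 + frobNorm (Uhat - U) ^ 2) := hhsum
    _ ≤ 16 * frobNorm (Uhat - U) ^ 2 := by linarith
end

section
/- Let x₁,…,xₙ and x₁*,…,xₙ* be vectors in ℝ^d with ‖x_i*‖₂ ≤ 1 for every i ∈ {1,…,n}, and set δ = Σ_{i=1}^n ‖x_i − x_i*‖₂². Then Σ_{i=1}^n Σ_{j=1}^n (⟨x_i, x_j⟩ − ⟨x_i*, x_j*⟩)² ≤ 6·n·δ + 3·δ². -/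
open scoped RealInnerProductSpace

/-- If `‖x_i*‖ ≤ 1` for all `i` and `δ = ∑ i ‖x_i − x_i*‖²`, then
`∑_{i,j} (⟨x_i, x_j⟩ − ⟨x_i*, x_j*⟩)² ≤ 6nδ + 3δ²`. -/
theorem sum_sq_inner_diff_le {n d : ℕ} (x xs : Fin n → EuclideanSpace ℝ (Fin d))
    (hxs : ∀ i, ‖xs i‖ ≤ 1) (δ : ℝ) (hδ : δ = ∑ i, ‖x i - xs i‖ ^ 2) :
    ∑ i, ∑ j, (⟪x i, x j⟫ - ⟪xs i, xs j⟫) ^ 2 ≤ 6 * n * δ + 3 * δ ^ 2 := by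
  have key : ∀ i j, (⟪x i, x j⟫ - ⟪xs i, xs j⟫) ^ 2 ≤
      3 * (‖x i - xs i‖ ^ 2 + ‖x j - xs j‖ ^ 2 + ‖x i - xs i‖ ^ 2 * ‖x j - xs j‖ ^ 2) := by
    intro i j
    have hdecomp : ⟪x i, x j⟫ - ⟪xs i, xs j⟫ =
        ⟪x i - xs i, xs j⟫ + ⟪xs i, x j - xs j⟫ + ⟪x i - xs i, x j - xs j⟫ := by
      simp [inner_sub_left, inner_sub_right]; ring
    rw [hdecomp]
    have hb1 : ⟪x i - xs i, xs j⟫ ^ 2 ≤ ‖x i - xs i‖ ^ 2 := by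
      have h := abs_real_inner_le_norm (x i - xs i) (xs j)
      have h2 : |⟪x i - xs i, xs j⟫| ^ 2 ≤ (‖x i - xs i‖ * ‖xs j‖) ^ 2 :=
        pow_le_pow_left₀ (abs_nonneg _) h 2
      have hj := hxs j
      nlinarith [sq_abs (⟪x i - xs i, xs j⟫), norm_nonneg (xs j), sq_nonneg (‖x i - xs i‖),
        mul_nonneg (sq_nonneg (‖x i - xs i‖)) (norm_nonneg (xs j))]
    have hb2 : ⟪xs i, x j - xs j⟫ ^ 2 ≤ ‖x j - xs j‖ ^ 2 := by
      have h := abs_real_inner_le_norm (xs i) (x j - xs j)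
      have h2 : |⟪xs i, x j - xs j⟫| ^ 2 ≤ (‖xs i‖ * ‖x j - xs j‖) ^ 2 :=
        pow_le_pow_left₀ (abs_nonneg _) h 2
      have hi := hxs i
      nlinarith [sq_abs (⟪xs i, x j - xs j⟫), norm_nonneg (xs i), sq_nonneg (‖x j - xs j‖),
        mul_nonneg (sq_nonneg (‖x j - xs j‖)) (norm_nonneg (xs i))]
    have hb3 : ⟪x i - xs i, x j - xs j⟫ ^ 2 ≤ ‖x i - xs i‖ ^ 2 * ‖x j - xs j‖ ^ 2 := by
      have h := abs_real_inner_le_norm (x i - xs i) (x j - xs j)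
      nlinarith [abs_nonneg (⟪x i - xs i, x j - xs j⟫), norm_nonneg (x i - xs i),
        norm_nonneg (x j - xs j), sq_abs (⟪x i - xs i, x j - xs j⟫)]
    nlinarith [sq_nonneg (⟪x i - xs i, xs j⟫ - ⟪xs i, x j - xs j⟫),
      sq_nonneg (⟪xs i, x j - xs j⟫ - ⟪x i - xs i, x j - xs j⟫),
      sq_nonneg (⟪x i - xs i, xs j⟫ - ⟪x i - xs i, x j - xs j⟫)]
  set A : Fin n → ℝ := fun i => ‖x i - xs i‖ ^ 2 with hA
  calc ∑ i, ∑ j, (⟪x i, x j⟫ - ⟪xs i, xs j⟫) ^ 2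
      ≤ ∑ i, ∑ j, 3 * (A i + A j + A i * A j) := by
        refine Finset.sum_le_sum fun i _ => Finset.sum_le_sum fun j _ => key i j
    _ = 6 * n * δ + 3 * δ ^ 2 := by
        have h1 : ∀ i : Fin n, ∑ j, 3 * (A i + A j + A i * A j)
            = 3 * ((n : ℝ) * A i + δ + A i * δ) := by
          intro i
          rw [← Finset.mul_sum, Finset.sum_add_distrib, Finset.sum_add_distrib,
            Finset.sum_const, ← Finset.mul_sum, ← hδ, Finset.card_univ, Fintype.card_fin,
            nsmul_eq_mul]
        rw [Finset.sum_congr rfl fun i _ => h1 i, ← Finset.mul_sum,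
          Finset.sum_add_distrib, Finset.sum_add_distrib, ← Finset.mul_sum,
          ← Finset.sum_mul, ← hδ, Finset.sum_const, Finset.card_univ, Fintype.card_fin,
          nsmul_eq_mul]
        ring
end
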